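/- Let P > 0 and write s_{:,i} = (s_{1,i},…,s_{N_r,i}) ∈ ℂ^{N_r}. Suppose (W*, t*) is an optimal solution of the block-level SB slot-invariant problem (maximize t over pairs (W, t), W ∈ ℂ^{N_t×N_r}, subject to CI_i(W s_{:,i}, t) for all i and ∑_{i=1}^{N_s} ‖W s_{:,i}‖² ≤ P) with t* > 0. Then ∑_{i=1}^{N_s} ‖W* s_{:,i}‖² = P, and W*/t* is an optimal solution of the block-level PM slot-invariant problem (minimize ∑_i ‖W s_{:,i}‖² over W subject to CI_i(W s_{:,i}, 1) for all i), with optimal value P/(t*)². -/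

import Mathlib

/-!
Both claims come from rescaling: the CI constraints are positively homogeneous in `(W, t)` and
the block power `Q(W) = ∑ᵢ ‖W s_{:,i}‖²` is quadratic in `W`. Hence any `W` feasible at level
`t` can be scaled to use the full budget `P`, and optimality of `t*` gives `t² P ≤ t*² Q(W)`.
For `W = W*` this says the budget is exhausted, and for `W` feasible at level `1` it says
`Q(W) ≥ P / t*² = Q(W* / t*)`. The powers involved are nonzero because a zero-power feasible
precoder forces every `√γ` to vanish, which would make the SB problem unbounded in `t`.
-/

open scoped BigOperators

/-- The constructive-interference (CI) constraint in a given symbol slot: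
`CI Nt Nr M h s γ σ x t` holds iff for every user `k`,
`Re((h_kᵀ x)/s_k) − |Im((h_kᵀ x)/s_k)| / tan(π/M) ≥ t·√(γ_k)·σ`. -/
noncomputable def CI (Nt Nr M : ℕ) (h : Fin Nr → Fin Nt → ℂ)
    (s : Fin Nr → ℂ) (γ : Fin Nr → ℝ) (σ : ℝ)
    (x : Fin Nt → ℂ) (t : ℝ) : Prop :=
  ∀ k : Fin Nr,
    ((∑ j, h k j * x j) / s k).re -
        |((∑ j, h k j * x j) / s k).im| / Real.tan (Real.pi / M) ≥
      t * Real.sqrt (γ k) * σ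

section CI

variable {Nt Nr M : ℕ} {h : Fin Nr → Fin Nt → ℂ} {s : Fin Nr → ℂ} {γ : Fin Nr → ℝ} {σ : ℝ}
  {x : Fin Nt → ℂ} {t : ℝ}

lemma CI.smul {c : ℝ} (hx : CI Nt Nr M h s γ σ x t) (hc : 0 ≤ c) :
    CI Nt Nr M h s γ σ (c • x) (c * t) := by
  intro k
  have hsum : (∑ j, h k j * (c • x) j) / s k = c * ((∑ j, h k j * x j) / s k) := by
    simp only [Pi.smul_apply, Complex.real_smul, mul_left_comm _ (c : ℂ), ← Finset.mul_sum,
      mul_div_assoc]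
  rw [hsum, Complex.re_ofReal_mul, Complex.im_ofReal_mul, abs_mul, abs_of_nonneg hc,
    mul_div_assoc]
  have := mul_le_mul_of_nonneg_left (hx k) hc
  linarith

lemma CI.sqrt_eq_zero_of_zero (h0 : CI Nt Nr M h s γ σ 0 t) (hσ : 0 < σ) (ht : 0 < t)
    (k : Fin Nr) : √(γ k) = 0 := by
  have hk := h0 k
  simp only [Pi.zero_apply, mul_zero, Finset.sum_const_zero, zero_div, Complex.zero_re,
    Complex.zero_im, abs_zero, sub_zero] at hk
  refine le_antisymm ?_ (Real.sqrt_nonneg _)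
  by_contra! hpos
  linarith [mul_pos (mul_pos ht hpos) hσ]

lemma CI.of_forall_sqrt_eq_zero (hx : CI Nt Nr M h s γ σ x t) (hγ : ∀ k, √(γ k) = 0)
    (t' : ℝ) : CI Nt Nr M h s γ σ x t' := by
  intro k
  simpa [hγ k] using hx k

end CI

section Block

variable {Nt Nr Ns M : ℕ} {h : Fin Nr → Fin Nt → ℂ} {s : Fin Nr → Fin Ns → ℂ}
  {γ : Fin Nr → Fin Ns → ℝ} {σ : ℝ} {W : Matrix (Fin Nt) (Fin Nr) ℂ} {t : ℝ}

noncomputable def blockPower (s : Fin Nr → Fin Ns → ℂ) (W : Matrix (Fin Nt) (Fin Nr) ℂ) : ℝ :=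
  ∑ i, ∑ j, ‖W.mulVec (fun k => s k i) j‖ ^ 2

def BlockCI (Nt Nr Ns M : ℕ) (h : Fin Nr → Fin Nt → ℂ) (s : Fin Nr → Fin Ns → ℂ)
    (γ : Fin Nr → Fin Ns → ℝ) (σ : ℝ) (W : Matrix (Fin Nt) (Fin Nr) ℂ) (t : ℝ) : Prop :=
  ∀ i, CI Nt Nr M h (fun k => s k i) (fun k => γ k i) σ (W.mulVec fun k => s k i) t

lemma blockPower_nonneg : 0 ≤ blockPower s W := by
  unfold blockPower
  positivity

lemma blockPower_smul (c : ℝ) : blockPower s (c • W) = c ^ 2 * blockPower s W := by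
  simp only [blockPower, Matrix.smul_mulVec, Pi.smul_apply, norm_smul, Real.norm_eq_abs,
    mul_pow, sq_abs, Finset.mul_sum]

lemma mulVec_eq_zero_of_blockPower_eq_zero (hW : blockPower s W = 0) (i : Fin Ns) :
    W.mulVec (fun k => s k i) = 0 := by
  have hi := (Finset.sum_eq_zero_iff_of_nonneg fun i _ => by positivity).mp hW i
    (Finset.mem_univ i)
  funext j
  have hj := (Finset.sum_eq_zero_iff_of_nonneg fun j _ => by positivity).mp hi j
    (Finset.mem_univ j)
  simpa using hj

lemma BlockCI.smul {c : ℝ} (hW : BlockCI Nt Nr Ns M h s γ σ W t) (hc : 0 ≤ c) :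
    BlockCI Nt Nr Ns M h s γ σ (c • W) (c * t) := fun i => by
  rw [Matrix.smul_mulVec]
  exact (hW i).smul hc

lemma BlockCI.sqrt_eq_zero_of_blockPower_eq_zero (hW : BlockCI Nt Nr Ns M h s γ σ W t)
    (hσ : 0 < σ) (ht : 0 < t) (h0 : blockPower s W = 0) (k : Fin Nr) (i : Fin Ns) :
    √(γ k i) = 0 := by
  have hi := hW i
  rw [mulVec_eq_zero_of_blockPower_eq_zero h0 i] at hi
  exact hi.sqrt_eq_zero_of_zero hσ ht k

lemma BlockCI.of_forall_sqrt_eq_zero (hW : BlockCI Nt Nr Ns M h s γ σ W t)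
    (hγ : ∀ k i, √(γ k i) = 0) (t' : ℝ) : BlockCI Nt Nr Ns M h s γ σ W t' := fun i =>
  (hW i).of_forall_sqrt_eq_zero (fun k => hγ k i) t'

end Block

section SlotInvariantSB

variable {Nt Nr Ns M : ℕ} {h : Fin Nr → Fin Nt → ℂ} {s : Fin Nr → Fin Ns → ℂ}
  {γ : Fin Nr → Fin Ns → ℝ} {σ P tstar : ℝ} {W Wstar : Matrix (Fin Nt) (Fin Nr) ℂ} {t : ℝ}

lemma sq_mul_le_of_forall_le (hopt : ∀ W t, BlockCI Nt Nr Ns M h s γ σ W t →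
      blockPower s W ≤ P → t ≤ tstar)
    (hP : 0 ≤ P) (hW : BlockCI Nt Nr Ns M h s γ σ W t) (ht : 0 ≤ t) (hQ : 0 < blockPower s W) :
    t ^ 2 * P ≤ tstar ^ 2 * blockPower s W := by
  set c := √(P / blockPower s W)
  have hc : c ^ 2 * blockPower s W = P := by
    rw [Real.sq_sqrt (by positivity), div_mul_cancel₀ _ hQ.ne']
  have hct : c * t ≤ tstar :=
    hopt (c • W) (c * t) (hW.smul (Real.sqrt_nonneg _)) (by rw [blockPower_smul, hc])
  calc t ^ 2 * P = (c * t) ^ 2 * blockPower s W := by rw [← hc]; ring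
    _ ≤ tstar ^ 2 * blockPower s W := by gcongr

lemma blockPower_pos_of_forall_le (hopt : ∀ W t, BlockCI Nt Nr Ns M h s γ σ W t →
      blockPower s W ≤ P → t ≤ tstar)
    (hfeas : BlockCI Nt Nr Ns M h s γ σ Wstar tstar) (hpow : blockPower s Wstar ≤ P)
    (hσ : 0 < σ) (hW : BlockCI Nt Nr Ns M h s γ σ W t) (ht : 0 < t) : 0 < blockPower s W := by
  refine blockPower_nonneg.lt_of_ne fun h0 => ?_
  have hγ := hW.sqrt_eq_zero_of_blockPower_eq_zero hσ ht h0.symm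
  linarith [hopt Wstar (tstar + 1) (hfeas.of_forall_sqrt_eq_zero hγ _) hpow]

end SlotInvariantSB

theorem stmt14_general (Nt Nr Ns M : ℕ)
    (h : Fin Nr → Fin Nt → ℂ)
    (s : Fin Nr → Fin Ns → ℂ)
    (γ : Fin Nr → Fin Ns → ℝ)
    (σ : ℝ) (hσ : 0 < σ)
    (P : ℝ)
    (Wstar : Matrix (Fin Nt) (Fin Nr) ℂ) (tstar : ℝ) (htstar : 0 < tstar)
    (hfeas : ∀ i, CI Nt Nr M h (fun k => s k i) (fun k => γ k i) σ
      (Wstar.mulVec fun k => s k i) tstar)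
    (hpow : ∑ i, ∑ j, ‖Wstar.mulVec (fun k => s k i) j‖ ^ 2 ≤ P)
    (hopt : ∀ (W : Matrix (Fin Nt) (Fin Nr) ℂ) (t : ℝ),
      (∀ i, CI Nt Nr M h (fun k => s k i) (fun k => γ k i) σ
        (W.mulVec fun k => s k i) t) →
      (∑ i, ∑ j, ‖W.mulVec (fun k => s k i) j‖ ^ 2 ≤ P) → t ≤ tstar) :
    (∑ i, ∑ j, ‖Wstar.mulVec (fun k => s k i) j‖ ^ 2 = P) ∧
    (∀ i, CI Nt Nr M h (fun k => s k i) (fun k => γ k i) σ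
        (((1 / tstar) • Wstar).mulVec fun k => s k i) 1) ∧
    (∀ W : Matrix (Fin Nt) (Fin Nr) ℂ,
      (∀ i, CI Nt Nr M h (fun k => s k i) (fun k => γ k i) σ
        (W.mulVec fun k => s k i) 1) →
      ∑ i, ∑ j, ‖((1 / tstar) • Wstar).mulVec (fun k => s k i) j‖ ^ 2 ≤
        ∑ i, ∑ j, ‖W.mulVec (fun k => s k i) j‖ ^ 2) ∧
    (∑ i, ∑ j, ‖((1 / tstar) • Wstar).mulVec (fun k => s k i) j‖ ^ 2
      = P / tstar ^ 2) := by
  have hSpos : 0 < blockPower s Wstar :=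
    blockPower_pos_of_forall_le hopt hfeas hpow hσ hfeas htstar
  have hP : 0 ≤ P := hSpos.le.trans hpow
  have hactive : blockPower s Wstar = P := hpow.antisymm <| le_of_mul_le_mul_left
    (sq_mul_le_of_forall_le hopt hP hfeas htstar.le hSpos) (by positivity)
  have hscaled : blockPower s ((1 / tstar) • Wstar) = P / tstar ^ 2 := by
    rw [blockPower_smul, hactive]
    field_simp
  refine ⟨hactive, ?_, fun W hW => ?_, hscaled⟩
  · have := BlockCI.smul hfeas (c := 1 / tstar) (by positivity)
    rwa [one_div_mul_cancel htstar.ne'] at this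
  · show blockPower s _ ≤ blockPower s W
    rw [hscaled, div_le_iff₀ (by positivity), mul_comm]
    simpa using sq_mul_le_of_forall_le hopt hP hW zero_le_one
      (blockPower_pos_of_forall_le hopt hfeas hpow hσ hW one_pos)

/-- A block-level SB slot-invariant optimum `(W*, t*)` with `t* > 0` has active
power constraint `∑ᵢ ‖W* s_{:,i}‖² = P`, and `W*/t*` is a block-level PM
slot-invariant optimum with value `P/(t*)²`. -/
theorem stmt14 (Nt Nr Ns M : ℕ) (hNt : 0 < Nt) (hNr : 0 < Nr) (hNs : 0 < Ns)
    (hM : 3 ≤ M)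
    (h : Fin Nr → Fin Nt → ℂ)
    (s : Fin Nr → Fin Ns → ℂ) (hs : ∀ k i, s k i ≠ 0)
    (γ : Fin Nr → Fin Ns → ℝ) (hγ : ∀ k i, 0 ≤ γ k i)
    (σ : ℝ) (hσ : 0 < σ)
    (P : ℝ) (hP : 0 < P)
    (Wstar : Matrix (Fin Nt) (Fin Nr) ℂ) (tstar : ℝ) (htstar : 0 < tstar)
    (hfeas : ∀ i, CI Nt Nr M h (fun k => s k i) (fun k => γ k i) σ
      (Wstar.mulVec fun k => s k i) tstar)
    (hpow : ∑ i, ∑ j, ‖Wstar.mulVec (fun k => s k i) j‖ ^ 2 ≤ P)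
    (hopt : ∀ (W : Matrix (Fin Nt) (Fin Nr) ℂ) (t : ℝ),
      (∀ i, CI Nt Nr M h (fun k => s k i) (fun k => γ k i) σ
        (W.mulVec fun k => s k i) t) →
      (∑ i, ∑ j, ‖W.mulVec (fun k => s k i) j‖ ^ 2 ≤ P) → t ≤ tstar) :
    (∑ i, ∑ j, ‖Wstar.mulVec (fun k => s k i) j‖ ^ 2 = P) ∧
    (∀ i, CI Nt Nr M h (fun k => s k i) (fun k => γ k i) σ
        (((1 / tstar) • Wstar).mulVec fun k => s k i) 1) ∧
    (∀ W : Matrix (Fin Nt) (Fin Nr) ℂ,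
      (∀ i, CI Nt Nr M h (fun k => s k i) (fun k => γ k i) σ
        (W.mulVec fun k => s k i) 1) →
      ∑ i, ∑ j, ‖((1 / tstar) • Wstar).mulVec (fun k => s k i) j‖ ^ 2 ≤
        ∑ i, ∑ j, ‖W.mulVec (fun k => s k i) j‖ ^ 2) ∧
    (∑ i, ∑ j, ‖((1 / tstar) • Wstar).mulVec (fun k => s k i) j‖ ^ 2
      = P / tstar ^ 2) :=
  stmt14_general Nt Nr Ns M h s γ σ hσ P Wstar tstar htstar hfeas hpow hopt
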